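/- Let G be a connected graph of order n with clique number ω = 2 (i.e., triangle-free with at least one edge). Then q₁(G) ≥ 2 + 2cos(π/n), with equality if and only if G is the path P_n. -/

import Mathlib

open SimpleGraph

/-- The signless Laplacian matrix `Q(G) = D(G) + A(G)` of a simple graph. -/
noncomputable def signlessLaplacian {V : Type*} [Fintype V] [DecidableEq V]
    (G : SimpleGraph V) : Matrix V V ℝ := by
  classical exact Matrix.diagonal (fun v => (G.degree v : ℝ)) + G.adjMatrix ℝ

/-- The signless Laplacian spectral radius: the largest eigenvalue of `Q(G)`. -/
noncomputable def q1 {V : Type*} [Fintype V] [DecidableEq V] (G : SimpleGraph V) : ℝ :=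
  sSup {μ : ℝ | ∃ x : V → ℝ, x ≠ 0 ∧ (signlessLaplacian G).mulVec x = μ • x}

/-- The join `G ∇ H` of two simple graphs. -/
def gJoin {α β : Type*} (G : SimpleGraph α) (H : SimpleGraph β) : SimpleGraph (α ⊕ β) where
  Adj x y :=
    Sum.elim (fun a => Sum.elim (fun b => G.Adj a b) (fun _ => True) y)
             (fun a => Sum.elim (fun _ => True) (fun b => H.Adj a b) y) x
  symm := ⟨by rintro (a|a) (b|b) h <;> simp_all [SimpleGraph.adj_comm]⟩
  loopless := ⟨by rintro (a|a) h <;> simp_all⟩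

/-- `G` is a complete multipartite graph with exactly `t` (nonempty) parts. -/
def IsCompleteMultipartite' {α : Type*} (G : SimpleGraph α) (t : ℕ) : Prop :=
  ∃ f : α → Fin t, Function.Surjective f ∧ ∀ u v, G.Adj u v ↔ f u ≠ f v

/-- The kite graph `Ki_{n,ω}`: a clique on `{0,…,ω-1}` together with a path on the
remaining vertices, attached to the clique by a bridge. -/
def kite (n ω : ℕ) : SimpleGraph (Fin n) where
  Adj i j := i ≠ j ∧ (((i : ℕ) < ω ∧ (j : ℕ) < ω) ∨
    ((i : ℕ) + 1 = (j : ℕ) ∧ ω ≤ (j : ℕ)) ∨ ((j : ℕ) + 1 = (i : ℕ) ∧ ω ≤ (i : ℕ)))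
  symm := ⟨by rintro i j ⟨h1, h2⟩; exact ⟨h1.symm, by tauto⟩⟩
  loopless := ⟨fun i h => h.1 rfl⟩

/-- The closed-form bound `((3ω-4)k + 3r - 2 + √(k²ω² + ((2r+4)ω-8r)k + (r-2)²))/2`. -/
noncomputable def turanBound (ω k r : ℕ) : ℝ :=
  ((3 * (ω : ℝ) - 4) * k + 3 * r - 2 +
    Real.sqrt ((k : ℝ)^2 * (ω : ℝ)^2 + ((2 * (r : ℝ) + 4) * ω - 8 * r) * k + ((r : ℝ) - 2)^2)) / 2

/-!
If `G` is not a path, then either some vertex has degree `d ≥ 3`, and a Rayleigh quotient supported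
on its closed neighbourhood gives `q₁(G) ≥ d + 1 ≥ 4`, or `G` is 2-regular and `q₁(G) = 4`: a
connected graph of maximum degree at most 2 with a vertex of degree at most 1 is a path, the
vertices being labelled by their distance to that vertex. As `2 + 2 cos (π / n) < 4`, equality
forces `G ≅ Pₙ`. For `Pₙ`, the vector `(sin ((2j + 1) π / 2n))ⱼ` is a positive eigenvector of `Q`
with eigenvalue `2 + 2 cos (π / n)`, and a positive eigenvector of a nonnegative matrix belongs to
its largest eigenvalue.
-/

open Finset Matrix

namespace Matrix

variable {ι κ : Type*} [Fintype ι] [Fintype κ]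

def realEigenvalues (A : Matrix ι ι ℝ) : Set ℝ :=
  {μ | ∃ x : ι → ℝ, x ≠ 0 ∧ A *ᵥ x = μ • x}

lemma IsHermitian.dotProduct_mulVec_le [DecidableEq ι] {A : Matrix ι ι ℝ} (hA : A.IsHermitian)
    {c : ℝ} (hc : ∀ i, hA.eigenvalues i ≤ c) (x : ι → ℝ) : x ⬝ᵥ A *ᵥ x ≤ c * (x ⬝ᵥ x) := by
  have hpsd : (c • 1 - A).PosSemidef := by
    have hdiag : (diagonal fun i => c - hA.eigenvalues i) =
        c • 1 - diagonal (RCLike.ofReal ∘ hA.eigenvalues) := by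
      ext i j; by_cases h : i = j <;> simp [h]
    have : Unitary.conjStarAlgAut ℝ _ hA.eigenvectorUnitary
        (diagonal fun i => c - hA.eigenvalues i) = c • 1 - A := by
      rw [hdiag, map_sub, map_smul, map_one, ← hA.spectral_theorem]
    rw [← this, Unitary.conjStarAlgAut_apply,
      Unitary.isUnit_coe.posSemidef_star_right_conjugate_iff, posSemidef_diagonal_iff]
    exact fun i => sub_nonneg.mpr (hc i)
  simpa [sub_mulVec, dotProduct_sub, smul_mulVec, dotProduct_smul] using
    hpsd.dotProduct_mulVec_nonneg x

lemma IsHermitian.eigenvalues_mem_realEigenvalues [DecidableEq ι] {A : Matrix ι ι ℝ}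
    (hA : A.IsHermitian) (i : ι) : hA.eigenvalues i ∈ A.realEigenvalues := by
  refine ⟨WithLp.ofLp (hA.eigenvectorBasis i), ?_, hA.mulVec_eigenvectorBasis i⟩
  simpa using hA.eigenvectorBasis.orthonormal.ne_zero i

lemma le_of_mem_realEigenvalues_of_dotProduct_mulVec_le {A : Matrix ι ι ℝ} {c μ : ℝ}
    (hc : ∀ x, x ⬝ᵥ A *ᵥ x ≤ c * (x ⬝ᵥ x)) (hμ : μ ∈ A.realEigenvalues) : μ ≤ c := by
  obtain ⟨x, hx, hAx⟩ := hμ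
  have hpos : 0 < x ⬝ᵥ x := by simpa using dotProduct_star_self_pos_iff.mpr hx
  have := hc x
  rw [hAx, dotProduct_smul, smul_eq_mul] at this
  exact le_of_mul_le_mul_right this hpos

lemma IsHermitian.exists_isGreatest_realEigenvalues [DecidableEq ι] [Nonempty ι]
    {A : Matrix ι ι ℝ} (hA : A.IsHermitian) : ∃ c, IsGreatest A.realEigenvalues c := by
  obtain ⟨i, -, hi⟩ := exists_mem_eq_sup' univ_nonempty hA.eigenvalues
  refine ⟨hA.eigenvalues i, hA.eigenvalues_mem_realEigenvalues i, fun μ hμ => ?_⟩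
  exact le_of_mem_realEigenvalues_of_dotProduct_mulVec_le
    (hA.dotProduct_mulVec_le fun j => hi ▸ le_sup' _ (mem_univ j)) hμ

lemma le_of_mem_realEigenvalues_of_pos_eigenvector {A : Matrix ι ι ℝ} (hA : ∀ i j, 0 ≤ A i j)
    {u : ι → ℝ} (hu : ∀ i, 0 < u i) {r : ℝ} (hAu : A *ᵥ u = r • u) {μ : ℝ}
    (hμ : μ ∈ A.realEigenvalues) : μ ≤ r := by
  obtain ⟨x, hx, hAx⟩ := hμ
  obtain ⟨i₀, hi₀⟩ := Function.ne_iff.mp hx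
  have : Nonempty ι := ⟨i₀⟩
  obtain ⟨j, hj⟩ := Finite.exists_max fun k => |x k| / u k
  set c := |x j| / u j
  have hbound (l : ι) : |x l| ≤ c * u l := (div_le_iff₀ (hu l)).mp (hj l)
  have hxj : 0 < |x j| := by
    have hc : 0 < c * u i₀ := (abs_pos.mpr hi₀).trans_le (hbound i₀)
    exact (div_pos_iff_of_pos_right (hu j)).mp (pos_of_mul_pos_left hc (hu i₀).le)
  have key : |μ| * |x j| ≤ r * |x j| :=
    calc |μ| * |x j| = |∑ k, A j k * x k| := by
          rw [← abs_mul, ← smul_eq_mul, ← Pi.smul_apply, ← hAx]; rfl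
      _ ≤ ∑ k, A j k * |x k| := by
          refine (abs_sum_le_sum_abs _ _).trans_eq (sum_congr rfl fun k _ => ?_)
          rw [abs_mul, abs_of_nonneg (hA j k)]
      _ ≤ ∑ k, A j k * (c * u k) := by gcongr with k _; exacts [hA j k, hbound k]
      _ = c * (A *ᵥ u) j := by
          simp only [mulVec, dotProduct, mul_sum]
          exact sum_congr rfl fun k _ => by ring
      _ = r * |x j| := by
          rw [hAu, Pi.smul_apply, smul_eq_mul]
          simp only [c]; field_simp [(hu j).ne']
  exact (le_abs_self μ).trans (le_of_mul_le_mul_right key hxj)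

lemma realEigenvalues_submatrix_equiv (A : Matrix κ κ ℝ) (e : ι ≃ κ) :
    (A.submatrix e e).realEigenvalues = A.realEigenvalues := by
  ext μ
  constructor
  · rintro ⟨x, hx, hAx⟩
    rw [submatrix_mulVec_equiv] at hAx
    refine ⟨x ∘ e.symm, fun h => hx (funext fun i => by simpa using congrFun h (e i)), ?_⟩
    exact funext fun k => by simpa using congrFun hAx (e.symm k)
  · rintro ⟨y, hy, hAy⟩
    refine ⟨y ∘ e, fun h => hy (funext fun k => by simpa using congrFun h (e.symm k)), ?_⟩
    have : y ∘ e ∘ e.symm = y := by ext; simp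
    rw [submatrix_mulVec_equiv, Function.comp_assoc, this, hAy]
    rfl

end Matrix

section SignlessLaplacian

variable {V : Type*} [Fintype V] [DecidableEq V] (G : SimpleGraph V)

lemma signlessLaplacian_eq [DecidableRel G.Adj] :
    signlessLaplacian G = diagonal (fun v => (G.degree v : ℝ)) + G.adjMatrix ℝ := by
  unfold signlessLaplacian
  congr!

lemma signlessLaplacian_mulVec_apply [DecidableRel G.Adj] (x : V → ℝ) (v : V) :
    (signlessLaplacian G *ᵥ x) v = ∑ w ∈ G.neighborFinset v, (x v + x w) := by
  rw [signlessLaplacian_eq, add_mulVec, Pi.add_apply, mulVec_diagonal, adjMatrix_mulVec_apply,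
    sum_add_distrib, sum_const, card_neighborFinset_eq_degree, nsmul_eq_mul]

lemma signlessLaplacian_isHermitian : (signlessLaplacian G).IsHermitian := by
  classical
  rw [signlessLaplacian_eq]
  exact (isHermitian_diagonal _).add (G.isSymm_adjMatrix)

lemma signlessLaplacian_nonneg (v w : V) : 0 ≤ signlessLaplacian G v w := by
  classical
  rw [signlessLaplacian_eq, Matrix.add_apply, diagonal_apply, adjMatrix_apply]
  positivity

lemma q1_eq_sSup : q1 G = sSup (signlessLaplacian G).realEigenvalues := rfl

lemma isGreatest_q1 [Nonempty V] : IsGreatest (signlessLaplacian G).realEigenvalues (q1 G) := by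
  obtain ⟨c, hc⟩ := (signlessLaplacian_isHermitian G).exists_isGreatest_realEigenvalues
  rwa [q1_eq_sSup, hc.csSup_eq]

lemma dotProduct_mulVec_le_q1_mul [Nonempty V] (x : V → ℝ) :
    x ⬝ᵥ signlessLaplacian G *ᵥ x ≤ q1 G * (x ⬝ᵥ x) :=
  (signlessLaplacian_isHermitian G).dotProduct_mulVec_le
    (fun i => (isGreatest_q1 G).2
      ((signlessLaplacian_isHermitian G).eigenvalues_mem_realEigenvalues i)) x

lemma q1_eq_of_pos_eigenvector [Nonempty V] {u : V → ℝ} (hu : ∀ v, 0 < u v) {r : ℝ}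
    (h : signlessLaplacian G *ᵥ u = r • u) : q1 G = r := by
  inhabit V
  refine IsGreatest.csSup_eq ⟨⟨u, fun h0 => (hu default).ne' (congrFun h0 default), h⟩, ?_⟩
  exact fun μ hμ =>
    le_of_mem_realEigenvalues_of_pos_eigenvector (signlessLaplacian_nonneg G) hu h hμ

end SignlessLaplacian

namespace SimpleGraph

section Paths

variable {V : Type*} {G : SimpleGraph V}

lemma Reachable.exists_adj_dist_eq_of_dist_eq_succ {u v : V} (hr : G.Reachable u v) {k : ℕ}
    (h : G.dist u v = k + 1) : ∃ w, G.Adj v w ∧ G.dist u w = k := by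
  obtain ⟨p, hp⟩ := hr.symm.exists_walk_length_eq_dist
  rw [dist_comm, h] at hp
  cases p with
  | nil => simp at hp
  | cons hadj q =>
    rename_i w
    refine ⟨w, hadj, ?_⟩
    have hq : q.length = k := by simpa using hp
    have hle : G.dist u w ≤ k := by
      rw [dist_comm, ← hq]
      exact dist_le q
    rcases hadj.diff_dist_adj (u := u) with h' | h' | h' <;> omega

variable [Fintype V] [DecidableRel G.Adj]

lemma Connected.dist_injective (hconn : G.Connected) (hdeg : ∀ v, G.degree v ≤ 2) {v₀ : V}
    (hv₀ : G.degree v₀ ≤ 1) : Function.Injective (G.dist v₀) := by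
  suffices ∀ k u w, G.dist v₀ u = k → G.dist v₀ w = k → u = w from
    fun u w h => this _ u w h rfl
  intro k
  induction k with
  | zero =>
    intro u w hu hw
    rw [(hconn v₀ u).dist_eq_zero_iff] at hu
    rw [(hconn v₀ w).dist_eq_zero_iff] at hw
    rw [← hu, ← hw]
  | succ k ih =>
    intro u w hu hw
    obtain ⟨u', huu', hu'⟩ := (hconn v₀ u).exists_adj_dist_eq_of_dist_eq_succ hu
    obtain ⟨w', hww', hw'⟩ := (hconn v₀ w).exists_adj_dist_eq_of_dist_eq_succ hw
    obtain rfl := ih u' w' hu' hw'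
    by_contra hne
    cases k with
    | zero =>
      rw [(hconn v₀ u').dist_eq_zero_iff] at hu'
      subst hu'
      have := card_le_one.mp (G.card_neighborFinset_eq_degree v₀ ▸ hv₀) u
        (by simpa using huu'.symm) w (by simpa using hww'.symm)
      exact hne this
    | succ m =>
      obtain ⟨z, hu'z, hz⟩ := (hconn v₀ u').exists_adj_dist_eq_of_dist_eq_succ hu'
      have : 2 < (G.neighborFinset u').card :=
        two_lt_card.mpr ⟨u, by simpa using huu'.symm, w, by simpa using hww'.symm, z,
          by simpa using hu'z, hne, by rintro rfl; omega, by rintro rfl; omega⟩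
      have := hdeg u'
      rw [← card_neighborFinset_eq_degree] at this
      omega

lemma Connected.nonempty_iso_pathGraph (hconn : G.Connected) (hdeg : ∀ v, G.degree v ≤ 2)
    {v₀ : V} (hv₀ : G.degree v₀ ≤ 1) : Nonempty (G ≃g pathGraph (Fintype.card V)) := by
  have hinj := hconn.dist_injective hdeg hv₀
  have hlt (u : V) : G.dist v₀ u < Fintype.card V := by
    obtain ⟨p, hp, hlen⟩ := hconn.exists_path_of_dist v₀ u
    exact hlen ▸ hp.length_lt
  let f : V → Fin (Fintype.card V) := fun u => ⟨G.dist v₀ u, hlt u⟩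
  have hf : Function.Bijective f := (Fintype.bijective_iff_injective_and_card f).mpr
    ⟨fun u w h => hinj (congrArg Fin.val h), by simp⟩
  have hsucc {u w : V} (h : G.dist v₀ w = G.dist v₀ u + 1) : G.Adj u w := by
    obtain ⟨u', hwu', hu'⟩ := (hconn v₀ w).exists_adj_dist_eq_of_dist_eq_succ h
    exact hinj hu' ▸ hwu'.symm
  refine ⟨⟨Equiv.ofBijective f hf, fun {u w} => ?_⟩⟩
  simp only [Equiv.ofBijective_apply, pathGraph_adj, f]
  refine ⟨fun h => h.elim (fun h => hsucc h.symm) (fun h => (hsucc h.symm).symm), fun hadj => ?_⟩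
  have hne : G.dist v₀ w ≠ G.dist v₀ u := fun h => hadj.ne (hinj h).symm
  rcases hadj.diff_dist_adj (u := v₀) with h | h | h <;> omega

end Paths

section SpectralRadius

variable {V : Type*} [Fintype V] [DecidableEq V]

lemma Iso.q1_eq {W : Type*} [Fintype W] [DecidableEq W] {G : SimpleGraph V} {H : SimpleGraph W}
    (e : G ≃g H) : q1 G = q1 H := by
  classical
  have hdeg (v : V) : H.degree (e v) = G.degree v := by
    rw [← card_neighborSet_eq_degree, ← card_neighborSet_eq_degree]
    exact Fintype.card_congr (e.mapNeighborSet v).symm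
  have hQ : (signlessLaplacian H).submatrix e e = signlessLaplacian G := by
    ext v w
    simp [signlessLaplacian_eq, diagonal_apply, hdeg, e.map_adj_iff]
  rw [q1_eq_sSup, q1_eq_sSup, ← hQ]
  exact congrArg sSup (realEigenvalues_submatrix_equiv _ e.toEquiv)

section LowerBounds

variable {G : SimpleGraph V} [DecidableRel G.Adj]

lemma IsRegularOfDegree.q1_eq [Nonempty V] {d : ℕ} (h : G.IsRegularOfDegree d) :
    q1 G = 2 * d := by
  refine q1_eq_of_pos_eigenvector G (u := fun _ => 1) (fun _ => one_pos) (funext fun v => ?_)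
  rw [signlessLaplacian_mulVec_apply, sum_const, card_neighborFinset_eq_degree, h v]
  norm_num [mul_comm]

lemma degree_add_one_le_q1 {v : V} (hv : 0 < G.degree v) : (G.degree v : ℝ) + 1 ≤ q1 G := by
  have : Nonempty V := ⟨v⟩
  set d : ℝ := (G.degree v : ℝ)
  set N := G.neighborFinset v
  -- on the star at `v` alone this vector has Rayleigh quotient `d (d + 1)² / (d (d + 1)) = d + 1`
  set x : V → ℝ := fun w => if w = v then d else if G.Adj v w then 1 else 0
  have hxv : x v = d := if_pos rfl
  have hxN (u : V) (hu : u ∈ N) : x u = 1 := by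
    rw [mem_neighborFinset] at hu
    simp [x, hu, hu.ne']
  have hx_nonneg (w : V) : 0 ≤ x w := by simp only [x]; split_ifs <;> positivity
  have hQx_nonneg (w : V) : 0 ≤ (signlessLaplacian G *ᵥ x) w := by
    rw [signlessLaplacian_mulVec_apply]
    exact sum_nonneg fun u _ => add_nonneg (hx_nonneg w) (hx_nonneg u)
  have hvN : v ∉ N := by simp [N]
  have hcard : (N.card : ℝ) = d := by rw [card_neighborFinset_eq_degree]
  have hnorm : x ⬝ᵥ x = d * (d + 1) := by
    rw [dotProduct, ← sum_subset (subset_univ (insert v N)), sum_insert hvN, hxv,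
      sum_congr rfl fun u hu => by rw [hxN u hu], sum_const, nsmul_eq_mul, hcard]
    · ring
    · intro w _ hw
      simp only [mem_insert, not_or, N, mem_neighborFinset] at hw
      simp [x, hw.1, hw.2]
  have hQxv : (signlessLaplacian G *ᵥ x) v = d * (d + 1) := by
    rw [signlessLaplacian_mulVec_apply, sum_congr rfl fun u hu => by rw [hxv, hxN u hu],
      sum_const, nsmul_eq_mul, hcard]
  have hQxN (u : V) (hu : u ∈ N) : d + 1 ≤ (signlessLaplacian G *ᵥ x) u := by
    rw [signlessLaplacian_mulVec_apply, hxN u hu, ← hxv, add_comm]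
    refine single_le_sum (f := fun w => 1 + x w) (fun w _ => ?_) ?_
    · linarith [hx_nonneg w]
    · simpa [N, adj_comm] using hu
  have hform : d * (d + 1) * (d + 1) ≤ x ⬝ᵥ signlessLaplacian G *ᵥ x := by
    refine le_trans ?_ (sum_le_sum_of_subset_of_nonneg (subset_univ (insert v N))
      fun w _ _ => mul_nonneg (hx_nonneg w) (hQx_nonneg w))
    rw [sum_insert hvN, hxv, hQxv]
    have : ∑ u ∈ N, (d + 1) ≤ ∑ u ∈ N, x u * (signlessLaplacian G *ᵥ x) u :=
      sum_le_sum fun u hu => by rw [hxN u hu, one_mul]; exact hQxN u hu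
    rw [sum_const, nsmul_eq_mul, hcard] at this
    nlinarith
  have hpos : 0 < d * (d + 1) := by
    have : (0 : ℝ) < d := Nat.cast_pos.mpr hv
    positivity
  have := (hform.trans (dotProduct_mulVec_le_q1_mul G x)).trans_eq (by rw [hnorm, mul_comm])
  exact le_of_mul_le_mul_left (by linarith) hpos

end LowerBounds

lemma pathGraph_signlessLaplacian_mulVec_apply {n : ℕ} {g : ℤ → ℝ} (h₀ : g (-1) = -g 0)
    (hn : g n = -g (n - 1)) (j : Fin n) :
    (signlessLaplacian (pathGraph n) *ᵥ fun i => g i) j = 2 * g j + g (j - 1) + g (j + 1) := by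
  classical
  obtain ⟨j, hj⟩ := j
  have hsplit (w : Fin n) : (if (pathGraph n).Adj ⟨j, hj⟩ w then g j + g w else 0) =
      (if j + 1 = w then g j + g (w : ℕ) else 0) +
        (if (w : ℕ) + 1 = j then g j + g (w : ℕ) else 0) := by
    rw [pathGraph_adj, Fin.val_mk]
    split_ifs <;> first | omega | simp
  have hnext : ∑ k ∈ range n, (if j + 1 = k then g j + g (k : ℕ) else 0) = g j + g (j + 1) := by
    rw [sum_ite_eq]
    split_ifs with h
    · push_cast; rfl
    · have : j + 1 = n := by rw [mem_range, not_lt] at h; omega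
      rw [show ((j : ℕ) : ℤ) + 1 = n by exact_mod_cast this, hn,
        show ((n : ℤ) - 1) = j by push_cast [← this]; ring]
      ring
  have hprev : ∑ k ∈ range n, (if k + 1 = j then g j + g (k : ℕ) else 0) = g j + g (j - 1) := by
    rcases j with _ | i
    · simp [h₀]
    · simp_rw [Nat.succ_inj, sum_ite_eq' (range n) i]
      rw [if_pos (mem_range.mpr (by omega))]
      push_cast
      rw [add_sub_cancel_right]
  rw [signlessLaplacian_mulVec_apply, neighborFinset_eq_filter, sum_filter,
    sum_congr rfl fun w _ => hsplit w, sum_add_distrib,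
    Fin.sum_univ_eq_sum_range (fun k => if j + 1 = k then g j + g (k : ℕ) else 0),
    Fin.sum_univ_eq_sum_range (fun k => if k + 1 = j then g j + g (k : ℕ) else 0), hnext, hprev]
  ring

open Real in
lemma q1_pathGraph {n : ℕ} [NeZero n] : q1 (pathGraph n) = 2 + 2 * cos (π / n) := by
  set θ := π / n
  have hn0 : (n : ℝ) ≠ 0 := Nat.cast_ne_zero.mpr (NeZero.ne n)
  have hnθ : n * θ = π := mul_div_cancel₀ π hn0
  -- `g` is odd about `-1/2` and `n - 1/2`, so the boundary rows of `Q` act like interior ones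
  set g : ℤ → ℝ := fun k => sin ((2 * k + 1) * (θ / 2))
  have hrec (k : ℤ) : g (k - 1) + g (k + 1) = 2 * cos θ * g k := by
    simp only [g]
    rw [show (2 * ((k - 1 : ℤ) : ℝ) + 1) * (θ / 2) = (2 * k + 1) * (θ / 2) - θ by push_cast; ring,
      show (2 * ((k + 1 : ℤ) : ℝ) + 1) * (θ / 2) = (2 * k + 1) * (θ / 2) + θ by push_cast; ring,
      sin_sub, sin_add]
    ring
  have h₀ : g (-1) = -g 0 := by
    simp only [g]
    rw [← sin_neg]
    congr 1
    push_cast; ring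
  have hn : g n = -g (n - 1) := by
    simp only [g]
    rw [show (2 * ((n : ℤ) : ℝ) + 1) * (θ / 2) = θ / 2 + π by rw [← hnθ]; push_cast; ring,
      show (2 * ((n - 1 : ℤ) : ℝ) + 1) * (θ / 2) = π - θ / 2 by rw [← hnθ]; push_cast; ring,
      sin_add_pi, sin_pi_sub]
  have hpos (j : Fin n) : 0 < g j := by
    have hθ : 0 < θ := div_pos pi_pos (by positivity)
    have hj : (2 * ((j : ℕ) : ℝ) + 1) < 2 * n := by
      have := j.isLt
      exact_mod_cast (by omega : 2 * (j : ℕ) + 1 < 2 * n)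
    apply sin_pos_of_pos_of_lt_pi
    · push_cast; positivity
    · push_cast
      calc (2 * ((j : ℕ) : ℝ) + 1) * (θ / 2) < 2 * n * (θ / 2) := by gcongr
        _ = π := by rw [← hnθ]; ring
  refine q1_eq_of_pos_eigenvector _ hpos (funext fun j => ?_)
  rw [pathGraph_signlessLaplacian_mulVec_apply h₀ hn, add_assoc, hrec, Pi.smul_apply, smul_eq_mul]
  ring

lemma Connected.nonempty_iso_pathGraph_or_four_le_q1 {G : SimpleGraph V} [DecidableRel G.Adj]
    (hconn : G.Connected) : Nonempty (G ≃g pathGraph (Fintype.card V)) ∨ 4 ≤ q1 G := by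
  by_cases hdeg : ∀ v, G.degree v ≤ 2
  · by_cases hreg : G.IsRegularOfDegree 2
    · have := hconn.nonempty
      exact Or.inr (by rw [hreg.q1_eq]; norm_num)
    · obtain ⟨v₀, hv₀⟩ := not_forall.mp hreg
      exact Or.inl (hconn.nonempty_iso_pathGraph hdeg (v₀ := v₀) (by have := hdeg v₀; omega))
  · obtain ⟨v, hv⟩ := not_forall.mp hdeg
    have hq := degree_add_one_le_q1 (G := G) (v := v) (by omega)
    have : (3 : ℝ) ≤ G.degree v := by exact_mod_cast (by omega : 3 ≤ G.degree v)
    exact Or.inr (by linarith)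

end SpectralRadius

end SimpleGraph

theorem q1_ge_of_cliqueNum_two_general (n : ℕ) (G : SimpleGraph (Fin n)) (hconn : G.Connected) :
    q1 G ≥ 2 + 2 * Real.cos (Real.pi / n) ∧
      (q1 G = 2 + 2 * Real.cos (Real.pi / n) ↔ Nonempty (G ≃g pathGraph n)) := by
  classical
  have : NeZero n := ⟨fun h => by subst h; exact hconn.nonempty.elim Fin.elim0⟩
  have hpath (e : G ≃g pathGraph n) : q1 G = 2 + 2 * Real.cos (Real.pi / n) :=
    e.q1_eq.trans q1_pathGraph
  have hlt : 2 + 2 * Real.cos (Real.pi / n) < 4 := by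
    have hn : (1 : ℝ) ≤ n := Nat.one_le_cast.mpr (Nat.pos_of_neZero n)
    have := Real.cos_lt_cos_of_nonneg_of_le_pi le_rfl (div_le_self Real.pi_pos.le hn)
      (div_pos Real.pi_pos (by linarith))
    rw [Real.cos_zero] at this
    linarith
  have h := hconn.nonempty_iso_pathGraph_or_four_le_q1
  rw [Fintype.card_fin] at h
  rcases h with hiso | h4
  · obtain ⟨e⟩ := hiso
    exact ⟨(hpath e).ge, iff_of_true (hpath e) ⟨e⟩⟩
  · exact ⟨by linarith, iff_of_false (by linarith) fun ⟨e⟩ => by linarith [hpath e]⟩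

theorem q1_ge_of_cliqueNum_two (n : ℕ) (G : SimpleGraph (Fin n)) (hconn : G.Connected)
    (hw : G.cliqueNum = 2) :
    q1 G ≥ 2 + 2 * Real.cos (Real.pi / n) ∧
      (q1 G = 2 + 2 * Real.cos (Real.pi / n) ↔ Nonempty (G ≃g pathGraph n)) :=
  q1_ge_of_cliqueNum_two_general n G hconn
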